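/- arXiv:2307.00203 — 3 statements merged into one kernel-verified Lean document; each statement's English description precedes it below -/
import Mathlib

section
/- Let M = ([2n], B) be a rank-2 matroid whose thin Schubert cell G_M ⊆ G(2,2n) is nonempty. If exactly one pair of the form {j, j*} belongs to B, then G_M ∩ H = ∅, where H = {Σ_j x_{j,j*} = 0}. -/
/-- The star involution on `E_n = [2n]`, `i* = 2n - 1 - i` (0-indexed). -/
def nstar (n : ℕ) (i : Fin (2*n)) : Fin (2*n) :=
  ⟨2*n - 1 - (i : ℕ), by have h := i.isLt; omega⟩

/-- The symplectic linear form `s(x) = Σ_{j=1}^n x_{j,j*}`. -/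
noncomputable def sSum (n : ℕ) (x : Fin (2*n) → Fin (2*n) → ℂ) : ℂ :=
  ∑ i ∈ Finset.univ.filter (fun i : Fin (2*n) => (i : ℕ) < n), x i (nstar n i)

/-- If exactly one pair of the form `{j, j*}` belongs to the set of bases `B`
of a rank-2 matroid on `[2n]`, then the thin Schubert cell `G_M` does not meet
the hyperplane `H = {Σ_j x_{j,j*} = 0}`: every point of `G_M` has `s(x) ≠ 0`. -/
theorem thin_cell_misses_hyperplane (n : ℕ) (B : Set (Finset (Fin (2*n))))
    (hB : ∃! p : Finset (Fin (2*n)), p ∈ B ∧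
      ∃ j : Fin (2*n), p = ({j, nstar n j} : Finset (Fin (2*n))))
    (x : Fin (2*n) → Fin (2*n) → ℂ)
    (hanti : ∀ i j, x j i = - x i j)
    (hpl : ∀ a b c d, x a b * x c d - x a c * x b d + x a d * x b c = 0)
    (hsup : ∀ i j : Fin (2*n), i ≠ j →
      (x i j ≠ 0 ↔ ({i, j} : Finset (Fin (2*n))) ∈ B)) :
    sSum n x ≠ 0 := by
  obtain ⟨p, ⟨hpB, j, rfl⟩, huniq⟩ := hB
  have hstar2 : ∀ i : Fin (2*n), nstar n (nstar n i) = i := by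
    intro i; have := i.isLt; apply Fin.ext; simp [nstar]; omega
  have hn1 : 1 ≤ n := by have := j.isLt; omega
  set i₀ : Fin (2*n) := if (j : ℕ) < n then j else nstar n j with hi₀
  have hi₀lt : (i₀ : ℕ) < n := by
    have := j.isLt
    by_cases h : (j : ℕ) < n <;> simp [hi₀, h, nstar] <;> omega
  have hpair : ({i₀, nstar n i₀} : Finset (Fin (2*n))) = {j, nstar n j} := by
    by_cases h : (j : ℕ) < n
    · simp [hi₀, h]
    · simp only [hi₀, if_neg h, hstar2]
      exact Finset.pair_comm _ _
  have hne : ∀ i : Fin (2*n), (i : ℕ) < n → i ≠ nstar n i := by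
    intro i hi h
    have := congrArg Fin.val h
    simp [nstar] at this; omega
  have hstarge : ∀ i : Fin (2*n), (i : ℕ) < n → n ≤ (nstar n i : ℕ) := by
    intro i hi; simp [nstar]; omega
  have hsum : sSum n x = x i₀ (nstar n i₀) := by
    apply Finset.sum_eq_single_of_mem
    · simp [hi₀lt]
    · intro i hi hine
      simp only [Finset.mem_filter] at hi
      by_contra hx
      have hiB : ({i, nstar n i} : Finset (Fin (2*n))) ∈ B :=
        (hsup i (nstar n i) (hne i hi.2)).1 hx
      have heq := huniq _ ⟨hiB, i, rfl⟩
      rw [hpair.symm] at heq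
      have hmem : i ∈ ({i₀, nstar n i₀} : Finset (Fin (2*n))) := by
        rw [← heq]; simp
      rcases Finset.mem_insert.1 hmem with h | h
      · exact hine h
      · have h1 := hstarge i₀ hi₀lt
        have h2 : (i : ℕ) = (nstar n i₀ : ℕ) := congrArg Fin.val (Finset.mem_singleton.1 h)
        omega
  rw [hsum]
  refine (hsup i₀ (nstar n i₀) (hne i₀ hi₀lt)).2 ?_
  rw [hpair]
  exact hpB
end

section
/- Let M = ([2n], B) be a rank-2 matroid with nonempty thin Schubert cell G_M. If at least two pairs of the form {j, j*} belong to B, then G_M ⊄ H and G_M ∩ H ≠ ∅, where H = {Σ_j x_{j,j*} = 0}; moreover for any x ∈ G_M the intersection of the torus orbit T'·x with H is a hypersurface in T'·x (in particular nonempty and irreducible), where T' = (C*)^{2n} acts by scaling coordinates. -/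
/-- Membership in the thin Schubert cell `G_M` for the matroid with bases `B`:
`x` is a Plücker vector (antisymmetric, Plücker relations) with support `B`. -/
def InCell (n : ℕ) (B : Set (Finset (Fin (2*n))))
    (x : Fin (2*n) → Fin (2*n) → ℂ) : Prop :=
  (∀ i j, x j i = - x i j) ∧
  (∀ a b c d, x a b * x c d - x a c * x b d + x a d * x b c = 0) ∧
  (∀ i j : Fin (2*n), i ≠ j → (x i j ≠ 0 ↔ ({i, j} : Finset (Fin (2*n))) ∈ B))

/-- The restriction of `s` to the torus orbit of `x`, as a Laurent polynomial
in the torus coordinates `λ₁, …, λ_{2n}`: `f = Σ_j x_{j,j*} λ_j λ_{j*}`, an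
element of the Laurent polynomial ring `ℂ[λ₁^±, …, λ_{2n}^±]` (modeled as the
group algebra of the character lattice `ℤ^{2n}`). -/
noncomputable def orbitHyp (n : ℕ) (x : Fin (2*n) → Fin (2*n) → ℂ) :
    AddMonoidAlgebra ℂ (Fin (2*n) → ℤ) :=
  ∑ j ∈ Finset.univ.filter (fun j : Fin (2*n) => (j : ℕ) < n),
    AddMonoidAlgebra.single (fun k => if k = j ∨ k = nstar n j then 1 else 0)
      (x j (nstar n j))

/-!
Writing `z_j = t_j t_{j*}`, the value of `s` on the orbit point `t·x` is the linear form
`Σ_{j<n} x_{j,j*} z_j`; it has two nonzero coefficients, so it takes both the value `0` and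
nonzero values at points of the torus.

For primality, the unimodular change of characters `v ↦ (v_m for m < n, v_m - v_{m*} for m ≥ n)`
sends each `λ_j λ_{j*}` to `λ_j`, so it turns `orbitHyp n x` into a linear form `Σ_j c_j X_j`
of the Laurent polynomial ring. A linear form is prime in the polynomial ring, and it stays prime
after the variables are inverted because it divides no monomial: it vanishes at a point of the
torus, where monomials do not.
-/

open MvPolynomial

section LaurentMvPolynomial

variable (σ : Type*) (R : Type*) [CommRing R]

def natExpToInt : (σ →₀ ℕ) →+ (σ → ℤ) where
  toFun μ i := μ i
  map_zero' := by ext; simp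
  map_add' _ _ := by ext; simp

noncomputable def toLaurentMv : MvPolynomial σ R →+* AddMonoidAlgebra R (σ → ℤ) :=
  AddMonoidAlgebra.mapDomainRingHom R (natExpToInt σ)

variable {σ R}

@[simp]
lemma natExpToInt_apply (μ : σ →₀ ℕ) (i : σ) : natExpToInt σ μ i = μ i := rfl

lemma natExpToInt_injective : Function.Injective (natExpToInt σ) := fun μ ν h =>
  Finsupp.ext fun i => by simpa using congrFun h i

lemma natExpToInt_single [DecidableEq σ] (i : σ) :
    natExpToInt σ (Finsupp.single i 1) = Pi.single i 1 := by
  funext m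
  simp [Finsupp.single_apply, Pi.single_apply, eq_comm]

lemma toLaurentMv_monomial (μ : σ →₀ ℕ) (c : R) :
    toLaurentMv σ R (monomial μ c) = AddMonoidAlgebra.single (natExpToInt σ μ) c := by
  simp [toLaurentMv, ← single_eq_monomial]

lemma toLaurentMv_injective : Function.Injective (toLaurentMv σ R) :=
  AddMonoidAlgebra.mapDomain_injective natExpToInt_injective

lemma AddMonoidAlgebra.isUnit_single_one {G : Type*} [AddCommGroup G] (g : G) :
    IsUnit (AddMonoidAlgebra.single g (1 : R)) :=
  .of_mul_eq_one (AddMonoidAlgebra.single (-g) 1) <| by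
    rw [AddMonoidAlgebra.single_mul_single, add_neg_cancel, mul_one, AddMonoidAlgebra.one_def]

lemma exists_mul_single_eq_toLaurentMv [Finite σ] (a : AddMonoidAlgebra R (σ → ℤ)) :
    ∃ μ r, a * AddMonoidAlgebra.single (natExpToInt σ μ) 1 = toLaurentMv σ R r := by
  induction a using AddMonoidAlgebra.induction_linear with
  | zero => exact ⟨0, 0, by simp⟩
  | add a b ha hb =>
    obtain ⟨μ, r, hr⟩ := ha
    obtain ⟨ν, s, hs⟩ := hb
    refine ⟨μ + ν, r * monomial ν 1 + s * monomial μ 1, ?_⟩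
    have hsplit : AddMonoidAlgebra.single (natExpToInt σ (μ + ν)) (1 : R) =
        AddMonoidAlgebra.single (natExpToInt σ μ) 1 *
          AddMonoidAlgebra.single (natExpToInt σ ν) 1 := by
      rw [AddMonoidAlgebra.single_mul_single, map_add, mul_one]
    rw [hsplit, map_add, map_mul, map_mul, toLaurentMv_monomial, toLaurentMv_monomial, ← hr,
      ← hs]
    ring
  | single v c =>
    have := Fintype.ofFinite σ
    let pos : σ →₀ ℕ := Finsupp.equivFunOnFinite.symm fun i => (v i).toNat
    let neg : σ →₀ ℕ := Finsupp.equivFunOnFinite.symm fun i => (-v i).toNat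
    refine ⟨neg, monomial pos c, ?_⟩
    rw [toLaurentMv_monomial, AddMonoidAlgebra.single_mul_single, mul_one]
    congr 1
    funext i
    simp only [natExpToInt_apply, Pi.add_apply, pos, neg, Finsupp.coe_equivFunOnFinite_symm]
    omega

lemma dvd_of_toLaurentMv_dvd [Finite σ] {p r : MvPolynomial σ R} (hp : Prime p)
    (hmon : ∀ μ, ¬ p ∣ monomial μ 1) (h : toLaurentMv σ R p ∣ toLaurentMv σ R r) : p ∣ r := by
  obtain ⟨h, hh⟩ := h
  obtain ⟨μ, s, hs⟩ := exists_mul_single_eq_toLaurentMv h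
  have hps : p * s = r * monomial μ 1 := toLaurentMv_injective <| by
    rw [map_mul, map_mul, ← hs, toLaurentMv_monomial, ← mul_assoc, ← hh]
  exact ((hp.dvd_or_dvd ⟨s, hps.symm⟩).resolve_right (hmon μ))

lemma prime_toLaurentMv [Finite σ] {p : MvPolynomial σ R} (hp : Prime p)
    (hmon : ∀ μ, ¬ p ∣ monomial μ 1) : Prime (toLaurentMv σ R p) := by
  refine ⟨(map_ne_zero_iff _ toLaurentMv_injective).mpr hp.ne_zero, fun hu => ?_,
    fun a b hab => ?_⟩
  · exact hp.not_isUnit (isUnit_of_dvd_one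
      (dvd_of_toLaurentMv_dvd hp hmon (by simpa using hu.dvd)))
  · obtain ⟨μ, r, hr⟩ := exists_mul_single_eq_toLaurentMv a
    obtain ⟨ν, s, hs⟩ := exists_mul_single_eq_toLaurentMv b
    have hrs : toLaurentMv σ R p ∣ toLaurentMv σ R (r * s) := by
      rw [map_mul, ← hr, ← hs, mul_mul_mul_comm]
      exact hab.mul_right _
    refine (hp.dvd_or_dvd (dvd_of_toLaurentMv_dvd hp hmon hrs)).imp (fun h => ?_) (fun h => ?_)
    · exact ((AddMonoidAlgebra.isUnit_single_one _).dvd_mul_right).mp (hr ▸ map_dvd _ h)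
    · exact ((AddMonoidAlgebra.isUnit_single_one _).dvd_mul_right).mp (hs ▸ map_dvd _ h)

end LaurentMvPolynomial

section LinearForm

variable {ι K : Type*} [Field K]

lemma prime_sumSMulX {c : ι →₀ K} (hc : c ≠ 0) : Prime (sumSMulX c) := by
  obtain ⟨i, hi⟩ := Finsupp.ne_iff.mp hc
  refine (irreducible_sumSMulX c (Finsupp.support_nonempty_iff.mpr hc) fun r hr => ?_).prime
  exact isUnit_iff_ne_zero.mpr fun h0 => hi (zero_dvd_iff.mp (h0 ▸ hr i))

lemma sumSMulX_equivFunOnFinite_symm {R : Type*} [CommRing R] [Fintype ι] (c : ι → R) :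
    sumSMulX (Finsupp.equivFunOnFinite.symm c) = ∑ i, monomial (Finsupp.single i 1) (c i) := by
  rw [sumSMulX, Finsupp.linearCombination_apply, Finsupp.sum_fintype _ _ (by simp)]
  simp [X, smul_monomial]

lemma toLaurentMv_sumSMulX {σ R : Type*} [Fintype σ] [DecidableEq σ] [CommRing R]
    (c : σ → R) :
    toLaurentMv σ R (sumSMulX (Finsupp.equivFunOnFinite.symm c)) =
      ∑ i, AddMonoidAlgebra.single (Pi.single i 1) (c i) := by
  simp [sumSMulX_equivFunOnFinite_symm, toLaurentMv_monomial, natExpToInt_single]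

lemma not_dvd_monomial_of_eval_eq_zero {σ R : Type*} [CommRing R] [IsDomain R]
    {p : MvPolynomial σ R} {z : σ → R} (hz : ∀ i, z i ≠ 0) (hp : eval z p = 0) (μ : σ →₀ ℕ) :
    ¬ p ∣ monomial μ 1 := by
  rintro ⟨q, hq⟩
  have h := congrArg (eval z) hq
  rw [eval_monomial, one_mul, map_mul, hp, zero_mul, Finsupp.prod] at h
  exact Finset.prod_ne_zero_iff.mpr (fun i _ => pow_ne_zero _ (hz i)) h

variable [Infinite K] {s : Finset ι} {c : ι → K}

lemma exists_forall_ne_zero_sum_mul_ne {j : ι} (hj : j ∈ s) (hcj : c j ≠ 0) (w : K) :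
    ∃ z : ι → K, (∀ i, z i ≠ 0) ∧ ∑ i ∈ s, c i * z i ≠ w := by
  classical
  set S := ∑ i ∈ s.erase j, c i
  obtain ⟨y, hy⟩ := Infinite.exists_notMem_finset ({0, (w - S) / c j} : Finset K)
  simp only [Finset.mem_insert, Finset.mem_singleton, not_or] at hy
  have hsum : ∑ i ∈ s, c i * Function.update (1 : ι → K) j y i = c j * y + S := by
    rw [← Finset.add_sum_erase s _ hj, Function.update_self]
    congr 1
    refine Finset.sum_congr rfl fun i hi => ?_
    rw [Function.update_of_ne (Finset.ne_of_mem_erase hi), Pi.one_apply, mul_one]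
  refine ⟨Function.update 1 j y, fun i => ?_, fun h => hy.2 ?_⟩
  · rcases eq_or_ne i j with rfl | hij
    · simpa using hy.1
    · simp [hij]
  · field_simp
    linear_combination hsum.symm.trans h

lemma exists_forall_ne_zero_sum_mul_eq_zero {j k : ι} (hj : j ∈ s) (hk : k ∈ s) (hjk : j ≠ k)
    (hcj : c j ≠ 0) (hck : c k ≠ 0) : ∃ z : ι → K, (∀ i, z i ≠ 0) ∧ ∑ i ∈ s, c i * z i = 0 := by
  classical
  obtain ⟨z, hz, hS⟩ := exists_forall_ne_zero_sum_mul_ne (Finset.mem_erase.mpr ⟨hjk, hj⟩) hcj 0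
  set S := ∑ i ∈ s.erase k, c i * z i
  refine ⟨Function.update z k (-S / c k), fun i => ?_, ?_⟩
  · rcases eq_or_ne i k with rfl | hik
    · simpa [hck] using hS
    · simpa [hik] using hz i
  · rw [← Finset.add_sum_erase s _ hk, Function.update_self,
      Finset.sum_congr rfl fun i hi => by rw [Function.update_of_ne (Finset.ne_of_mem_erase hi)]]
    field_simp
    ring

end LinearForm

section PairedPlucker

variable {n : ℕ}

lemma nstar_nstar (i : Fin (2 * n)) : nstar n (nstar n i) = i :=
  Fin.ext (by simp only [nstar]; omega)

lemma val_nstar_lt_iff {i : Fin (2 * n)} : (nstar n i : ℕ) < n ↔ n ≤ i := by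
  simp only [nstar]; omega

lemma nstar_ne_self (i : Fin (2 * n)) : nstar n i ≠ i := by
  simp only [ne_eq, Fin.ext_iff, nstar]; omega

variable (n) in
noncomputable def pairCoeff (x : Fin (2 * n) → Fin (2 * n) → ℂ) (i : Fin (2 * n)) : ℂ :=
  if (i : ℕ) < n then x i (nstar n i) else 0

variable (n) in
def pairExp (i : Fin (2 * n)) : Fin (2 * n) → ℤ :=
  fun k => if k = i ∨ k = nstar n i then 1 else 0

variable (n) in
def pairLatticeEquiv : (Fin (2 * n) → ℤ) ≃+ (Fin (2 * n) → ℤ) where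
  toFun v m := if (m : ℕ) < n then v m else v m - v (nstar n m)
  invFun w m := if (m : ℕ) < n then w m else w m + w (nstar n m)
  left_inv v := by
    funext m
    by_cases hm : (m : ℕ) < n
    · simp [hm]
    · simp [hm, val_nstar_lt_iff.mpr (not_lt.mp hm)]
  right_inv w := by
    funext m
    by_cases hm : (m : ℕ) < n
    · simp [hm]
    · simp [hm, val_nstar_lt_iff.mpr (not_lt.mp hm)]
  map_add' v w := by
    funext m
    by_cases hm : (m : ℕ) < n
    · simp [hm]
    · simp only [hm, if_false, Pi.add_apply]
      ring

lemma pairLatticeEquiv_pairExp {i : Fin (2 * n)} (hi : (i : ℕ) < n) :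
    pairLatticeEquiv n (pairExp n i) = Pi.single i 1 := by
  funext m
  by_cases hm : (m : ℕ) < n
  · have hmi : m ≠ nstar n i := fun h => by
      rw [h, val_nstar_lt_iff] at hm; omega
    simp [pairLatticeEquiv, pairExp, hm, hmi, Pi.single_apply]
  · have hmi : m ≠ i := fun h => hm (h ▸ hi)
    have hmi' : nstar n m ≠ nstar n i := fun h =>
      hmi (by simpa [nstar_nstar] using congrArg (nstar n) h)
    have hstar : m = nstar n i ↔ nstar n m = i :=
      ⟨fun h => h ▸ nstar_nstar i, fun h => h ▸ (nstar_nstar m).symm⟩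
    simp [pairLatticeEquiv, pairExp, hm, hmi, hmi', hstar]

lemma InCell.scale {B : Set (Finset (Fin (2 * n)))} {x : Fin (2 * n) → Fin (2 * n) → ℂ}
    (hx : InCell n B x) {t : Fin (2 * n) → ℂ} (ht : ∀ i, t i ≠ 0) :
    InCell n B (fun a b => t a * t b * x a b) := by
  obtain ⟨hanti, hplucker, hsupp⟩ := hx
  refine ⟨fun i j => ?_, fun a b c d => ?_, fun i j hij => ?_⟩
  · simp only [hanti i j]
    ring
  · linear_combination (t a * t b * t c * t d) * hplucker a b c d
  · simp [← hsupp i j hij, ht]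

lemma InCell.pairCoeff_ne_zero {B : Set (Finset (Fin (2 * n)))}
    {x : Fin (2 * n) → Fin (2 * n) → ℂ} (hx : InCell n B x) {i : Fin (2 * n)} (hi : (i : ℕ) < n)
    (hB : {i, nstar n i} ∈ B) :
    pairCoeff n x i ≠ 0 := by
  rw [pairCoeff, if_pos hi]
  exact (hx.2.2 i (nstar n i) (nstar_ne_self i).symm).mpr hB

lemma exists_torus_sSum_eq (x : Fin (2 * n) → Fin (2 * n) → ℂ) {z : Fin (2 * n) → ℂ}
    (hz : ∀ i, z i ≠ 0) : ∃ t : Fin (2 * n) → ℂ, (∀ i, t i ≠ 0) ∧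
      sSum n (fun a b => t a * t b * x a b) = ∑ i, pairCoeff n x i * z i := by
  refine ⟨fun m => if (m : ℕ) < n then 1 else z (nstar n m), fun m => ?_, ?_⟩
  · dsimp only
    split_ifs <;> simp [hz]
  · rw [sSum, Finset.sum_filter]
    refine Finset.sum_congr rfl fun i _ => ?_
    by_cases hi : (i : ℕ) < n
    · simp [pairCoeff, hi, nstar_nstar, val_nstar_lt_iff, mul_comm]
    · simp [pairCoeff, hi]

lemma exists_torus_sSum_eq_zero {x : Fin (2 * n) → Fin (2 * n) → ℂ} {j k : Fin (2 * n)}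
    (hjk : j ≠ k) (hj : pairCoeff n x j ≠ 0) (hk : pairCoeff n x k ≠ 0) :
    ∃ t : Fin (2 * n) → ℂ, (∀ i, t i ≠ 0) ∧ sSum n (fun a b => t a * t b * x a b) = 0 := by
  obtain ⟨z, hz, hsum⟩ := exists_forall_ne_zero_sum_mul_eq_zero
    (Finset.mem_univ j) (Finset.mem_univ k) hjk hj hk
  obtain ⟨t, ht, hst⟩ := exists_torus_sSum_eq x hz
  exact ⟨t, ht, hst.trans hsum⟩

lemma exists_torus_sSum_ne_zero {x : Fin (2 * n) → Fin (2 * n) → ℂ} {j : Fin (2 * n)}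
    (hj : pairCoeff n x j ≠ 0) :
    ∃ t : Fin (2 * n) → ℂ, (∀ i, t i ≠ 0) ∧ sSum n (fun a b => t a * t b * x a b) ≠ 0 := by
  obtain ⟨z, hz, hsum⟩ := exists_forall_ne_zero_sum_mul_ne (Finset.mem_univ j) hj 0
  obtain ⟨t, ht, hst⟩ := exists_torus_sSum_eq x hz
  exact ⟨t, ht, hst ▸ hsum⟩

lemma mapDomainRingEquiv_orbitHyp (x : Fin (2 * n) → Fin (2 * n) → ℂ) :
    AddMonoidAlgebra.mapDomainRingEquiv ℂ (pairLatticeEquiv n) (orbitHyp n x) =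
      ∑ i, AddMonoidAlgebra.single (Pi.single i 1) (pairCoeff n x i) := by
  rw [orbitHyp, map_sum, Finset.sum_filter]
  refine Finset.sum_congr rfl fun i _ => ?_
  by_cases hi : (i : ℕ) < n
  · rw [if_pos hi, AddMonoidAlgebra.mapDomainRingEquiv_single, pairCoeff, if_pos hi]
    exact congrArg (AddMonoidAlgebra.single · _) (pairLatticeEquiv_pairExp hi)
  · simp [pairCoeff, hi]

lemma prime_orbitHyp {x : Fin (2 * n) → Fin (2 * n) → ℂ} {j k : Fin (2 * n)}
    (hjk : j ≠ k) (hj : pairCoeff n x j ≠ 0) (hk : pairCoeff n x k ≠ 0) :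
    Prime (orbitHyp n x) := by
  set L := sumSMulX (Finsupp.equivFunOnFinite.symm (pairCoeff n x))
  have hL : Prime L := prime_sumSMulX fun h => hj (by simpa using DFunLike.congr_fun h j)
  obtain ⟨z, hz, hsum⟩ := exists_forall_ne_zero_sum_mul_eq_zero
    (Finset.mem_univ j) (Finset.mem_univ k) hjk hj hk
  have hmon : ∀ μ, ¬ L ∣ monomial μ 1 := not_dvd_monomial_of_eval_eq_zero hz <| by
    simpa [L, sumSMulX_equivFunOnFinite_symm, eval_monomial] using hsum
  rw [← MulEquiv.prime_iff (AddMonoidAlgebra.mapDomainRingEquiv ℂ (pairLatticeEquiv n)),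
    mapDomainRingEquiv_orbitHyp, ← toLaurentMv_sumSMulX]
  exact prime_toLaurentMv hL hmon

end PairedPlucker

/-- If at least two pairs `{j,j*}` are bases of a rank-2 matroid `M` with
nonempty thin Schubert cell `G_M`, then `G_M ⊄ H`, `G_M ∩ H ≠ ∅`, and for each
`x ∈ G_M` the intersection `T'x ∩ H` is a hypersurface of the orbit `T'x`
(it is a proper nonempty subset, cut out by the Laurent polynomial `orbitHyp`,
which is prime — hence the hypersurface is irreducible). -/
theorem orbit_hyperplane_section (n : ℕ) (B : Set (Finset (Fin (2*n))))
    (hB2 : ∃ j k : Fin (2*n), (j : ℕ) < n ∧ (k : ℕ) < n ∧ j ≠ k ∧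
      ({j, nstar n j} : Finset (Fin (2*n))) ∈ B ∧
      ({k, nstar n k} : Finset (Fin (2*n))) ∈ B)
    (hne : ∃ x, InCell n B x) :
    (∃ x, InCell n B x ∧ sSum n x ≠ 0) ∧
    (∃ x, InCell n B x ∧ sSum n x = 0) ∧
    (∀ x, InCell n B x →
      ((∃ t : Fin (2*n) → ℂ, (∀ i, t i ≠ 0) ∧
          sSum n (fun i j => t i * t j * x i j) = 0) ∧
        (∃ t : Fin (2*n) → ℂ, (∀ i, t i ≠ 0) ∧
          sSum n (fun i j => t i * t j * x i j) ≠ 0) ∧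
        Prime (orbitHyp n x))) := by
  obtain ⟨j, k, hj, hk, hjk, hBj, hBk⟩ := hB2
  obtain ⟨x₀, hx₀⟩ := hne
  obtain ⟨t, ht, hsum⟩ := exists_torus_sSum_ne_zero (hx₀.pairCoeff_ne_zero hj hBj)
  obtain ⟨t', ht', hsum'⟩ := exists_torus_sSum_eq_zero hjk
    (hx₀.pairCoeff_ne_zero hj hBj) (hx₀.pairCoeff_ne_zero hk hBk)
  refine ⟨⟨_, hx₀.scale ht, hsum⟩, ⟨_, hx₀.scale ht', hsum'⟩, fun x hx => ?_⟩
  have hxj := hx.pairCoeff_ne_zero hj hBj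
  have hxk := hx.pairCoeff_ne_zero hk hBk
  exact ⟨exists_torus_sSum_eq_zero hjk hxj hxk, exists_torus_sSum_ne_zero hxj,
    prime_orbitHyp hjk hxj hxk⟩
end

section
/- A symplectic matroid N of rank 2 on E_n is representable over C if and only if there exists a rank-2 symmetric matroid M on [2n] with symplectic projection π(M) = N and degree deg(M) ≠ 1. -/
/-- An admissible total order on `E_n`, encoded by the permutation sending each
rank (0 = largest) to the element of that rank. -/
def Adm (n : ℕ) (σ : Equiv.Perm (Fin (2*n))) : Prop :=
  (∀ k j : Fin (2*n), (k : ℕ) < n → (j : ℕ) < n → σ j ≠ nstar n (σ k)) ∧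
  (∀ k : Fin (2*n), (k : ℕ) < n →
    σ ⟨2*n - 1 - (k : ℕ), by have h := k.isLt; omega⟩ = nstar n (σ k))

/-- The shifted Bruhat order on pairs induced by the admissible order `σ`. -/
def ple (n : ℕ) (σ : Equiv.Perm (Fin (2*n))) (p q : Finset (Fin (2*n))) : Prop :=
  ∃ a b c d : Fin (2*n), p = {a, b} ∧ q = {c, d} ∧
    σ.symm b ≤ σ.symm a ∧ σ.symm d ≤ σ.symm c ∧
    σ.symm c ≤ σ.symm a ∧ σ.symm d ≤ σ.symm b

/-- `N` is a symplectic (`BC_n`-) matroid of rank 2 on `E_n`: a nonempty set of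
admissible pairs with a unique maximal element with respect to (the shifted
Bruhat order induced by) every admissible order on `E_n`. -/
def SympMatroid (n : ℕ) (N : Set (Finset (Fin (2*n)))) : Prop :=
  N.Nonempty ∧ (∀ p ∈ N, p.card = 2 ∧ ∀ i ∈ p, nstar n i ∉ p) ∧
  ∀ σ : Equiv.Perm (Fin (2*n)), Adm n σ →
    ∃! m, m ∈ N ∧ ∀ p ∈ N, ple n σ p m

/-- Plücker coordinates. -/
def pl (n : ℕ) (v w : Fin (2*n) → ℂ) (i j : Fin (2*n)) : ℂ :=
  v i * w j - v j * w i

namespace SympAux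

lemma nstar_nstar {n : ℕ} (i : Fin (2*n)) : nstar n (nstar n i) = i := by
  have := i.isLt
  apply Fin.ext
  simp only [nstar]
  omega

lemma pl_nz {n : ℕ} {v w : Fin (2*n) → ℂ} {i j : Fin (2*n)}
    (h : pl n v w i j ≠ 0) : (v i ≠ 0 ∨ w i ≠ 0) ∧ (v j ≠ 0 ∨ w j ≠ 0) := by
  constructor
  · by_contra hc
    push_neg at hc
    exact h (by simp [pl, hc.1, hc.2])
  · by_contra hc
    push_neg at hc
    exact h (by simp [pl, hc.1, hc.2])

lemma pl_trans {n : ℕ} {v w : Fin (2*n) → ℂ} {i j k : Fin (2*n)}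
    (hk : v k ≠ 0 ∨ w k ≠ 0) (h1 : pl n v w i k = 0) (h2 : pl n v w j k = 0) :
    pl n v w i j = 0 := by
  unfold pl at *
  rcases hk with hk | hk
  · have h : v k * (v i * w j - v j * w i) = 0 := by linear_combination v j * h1 - v i * h2
    exact (mul_eq_zero.mp h).resolve_left hk
  · have h : w k * (v i * w j - v j * w i) = 0 := by linear_combination w j * h1 - w i * h2
    exact (mul_eq_zero.mp h).resolve_left hk

lemma pl_li {n : ℕ} {v w : Fin (2*n) → ℂ} {i j : Fin (2*n)}
    (h : pl n v w i j ≠ 0) : LinearIndependent ℂ ![v, w] := by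
  rw [LinearIndependent.pair_iff]
  intro a b hab
  have hi := congrFun hab i
  have hj := congrFun hab j
  simp only [Pi.add_apply, Pi.smul_apply, smul_eq_mul, Pi.zero_apply] at hi hj
  constructor
  · have ha : a * pl n v w i j = 0 := by unfold pl; linear_combination w j * hi - w i * hj
    exact (mul_eq_zero.mp ha).resolve_right h
  · have hb : b * pl n v w i j = 0 := by unfold pl; linear_combination v i * hj - v j * hi
    exact (mul_eq_zero.mp hb).resolve_right h

lemma exists_pl_ne {n : ℕ} {v w : Fin (2*n) → ℂ}
    (h : LinearIndependent ℂ ![v, w]) : ∃ i j, pl n v w i j ≠ 0 := by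
  by_contra hc
  push_neg at hc
  rw [LinearIndependent.pair_iff] at h
  by_cases hv : v = 0
  · have := (h 1 0 (by simp [hv])).1
    simp at this
  · obtain ⟨i0, hi0⟩ := Function.ne_iff.mp hv
    simp only [Pi.zero_apply] at hi0
    have h0 : (w i0) • v + (-(v i0)) • w = 0 := by
      funext j
      have hp := hc i0 j
      unfold pl at hp
      simp only [Pi.add_apply, Pi.smul_apply, smul_eq_mul, Pi.zero_apply]
      linear_combination -hp
    have := (h _ _ h0).2
    exact hi0 (by simpa using this)

lemma natCard_filter {α : Type*} [Fintype α] (p : α → Prop) [DecidablePred p] :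
    Nat.card {x // p x} = (Finset.univ.filter p).card := by
  rw [Nat.card_eq_fintype_card, Fintype.card_subtype]

end SympAux


namespace SympAux

open Classical in
/-- slope of the direction of the class of `i` (0 for loops). -/
noncomputable def Xfun (n l : ℕ) (P : Fin l → Finset (Fin (2*n))) (i : Fin (2*n)) : ℂ :=
  if h : ∃ a, i ∈ P a then ((h.choose : Fin l) : ℕ) else 0

open Classical in
noncomputable def Dset (n l : ℕ) (P : Fin l → Finset (Fin (2*n))) : Finset (Fin (2*n)) :=
  Finset.univ.filter (fun i => (i:ℕ) < n ∧ ∃ a b, a ≠ b ∧ i ∈ P a ∧ nstar n i ∈ P b)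

open Classical in
noncomputable def cfun (n l : ℕ) (P : Fin l → Finset (Fin (2*n))) (i : Fin (2*n)) : ℂ :=
  if h : (Dset n l P).Nonempty then
    (if i = (Dset n l P).min' h then 1 - ((Dset n l P).card : ℂ) else 1)
  else 1

open Classical in
noncomputable def sfun (n l : ℕ) (P : Fin l → Finset (Fin (2*n))) (j : Fin (2*n)) : ℂ :=
  if n ≤ (j:ℕ) ∧ nstar n j ∈ Dset n l P then
    cfun n l P (nstar n j) / (Xfun n l P j - Xfun n l P (nstar n j))
  else 1

open Classical in
noncomputable def vfun (n l : ℕ) (P : Fin l → Finset (Fin (2*n))) (i : Fin (2*n)) : ℂ :=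
  if ∃ a, i ∈ P a then sfun n l P i else 0

open Classical in
noncomputable def wfun (n l : ℕ) (P : Fin l → Finset (Fin (2*n))) (i : Fin (2*n)) : ℂ :=
  if ∃ a, i ∈ P a then sfun n l P i * Xfun n l P i else 0

variable {n l : ℕ} {P : Fin l → Finset (Fin (2*n))}

lemma mem_un (hdisj : ∀ a b, a ≠ b → Disjoint (P a) (P b)) {i : Fin (2*n)} {a b : Fin l}
    (ha : i ∈ P a) (hb : i ∈ P b) : a = b := by
  by_contra hab
  exact (Finset.disjoint_left.mp (hdisj a b hab) ha) hb

lemma X_eq (hdisj : ∀ a b, a ≠ b → Disjoint (P a) (P b)) {i : Fin (2*n)} {a : Fin l}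
    (ha : i ∈ P a) : Xfun n l P i = ((a : ℕ) : ℂ) := by
  unfold Xfun
  rw [dif_pos ⟨a, ha⟩]
  rw [mem_un hdisj (⟨a, ha⟩ : ∃ a, i ∈ P a).choose_spec ha]

lemma vw_eq (hdisj : ∀ a b, a ≠ b → Disjoint (P a) (P b)) {i : Fin (2*n)} {a : Fin l}
    (ha : i ∈ P a) :
    vfun n l P i = sfun n l P i ∧ wfun n l P i = sfun n l P i * ((a : ℕ) : ℂ) := by
  unfold vfun wfun
  rw [if_pos ⟨a, ha⟩, if_pos ⟨a, ha⟩, X_eq hdisj ha]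
  exact ⟨rfl, rfl⟩

lemma vw_loop {i : Fin (2*n)} (h : ¬ ∃ a, i ∈ P a) :
    vfun n l P i = 0 ∧ wfun n l P i = 0 := by
  unfold vfun wfun
  rw [if_neg h, if_neg h]
  exact ⟨rfl, rfl⟩

lemma pl_eq (hdisj : ∀ a b, a ≠ b → Disjoint (P a) (P b)) {i j : Fin (2*n)} {a b : Fin l}
    (ha : i ∈ P a) (hb : j ∈ P b) :
    pl n (vfun n l P) (wfun n l P) i j =
      sfun n l P i * sfun n l P j * (((b : ℕ) : ℂ) - ((a : ℕ) : ℂ)) := by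
  obtain ⟨hv1, hw1⟩ := vw_eq hdisj ha
  obtain ⟨hv2, hw2⟩ := vw_eq hdisj hb
  unfold pl
  rw [hv1, hw1, hv2, hw2]
  ring

lemma c_ne (hdeg : (Dset n l P).card ≠ 1) {i : Fin (2*n)} (hi : i ∈ Dset n l P) :
    cfun n l P i ≠ 0 := by
  have hne : (Dset n l P).Nonempty := ⟨i, hi⟩
  unfold cfun
  rw [dif_pos hne]
  split
  · intro h
    apply hdeg
    have : ((Dset n l P).card : ℂ) = 1 := by linear_combination -h
    exact_mod_cast this
  · exact one_ne_zero

lemma c_sum (hdeg : (Dset n l P).card ≠ 1) : ∑ i ∈ Dset n l P, cfun n l P i = 0 := by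
  rcases (Dset n l P).eq_empty_or_nonempty with h | h
  · rw [h]; simp
  · classical
    set D := Dset n l P with hD
    set i0 := D.min' h with hi0
    have hmem : i0 ∈ D := D.min'_mem h
    rw [← Finset.sum_erase_add D _ hmem]
    have h1 : ∀ x ∈ D.erase i0, cfun n l P x = 1 := by
      intro x hx
      unfold cfun
      rw [dif_pos h, if_neg (Finset.ne_of_mem_erase hx)]
    rw [Finset.sum_congr rfl h1, Finset.sum_const, nsmul_eq_mul, mul_one]
    have h2 : cfun n l P i0 = 1 - (D.card : ℂ) := by
      unfold cfun
      rw [dif_pos h, if_pos rfl]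
    rw [h2, Finset.card_erase_of_mem hmem]
    have hcard : 1 ≤ D.card := Finset.card_pos.mpr h
    push_cast [Nat.cast_sub hcard]
    ring

lemma s_ne (hdisj : ∀ a b, a ≠ b → Disjoint (P a) (P b))
    (hdeg : (Dset n l P).card ≠ 1) (j : Fin (2*n)) : sfun n l P j ≠ 0 := by
  unfold sfun
  split
  · rename_i hcond
    obtain ⟨hnj, hDj⟩ := hcond
    apply div_ne_zero (c_ne hdeg hDj)
    have hmem := hDj
    unfold Dset at hmem
    rw [Finset.mem_filter] at hmem
    obtain ⟨-, -, a, b, hab, ha, hb⟩ := hmem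
    rw [nstar_nstar] at hb
    rw [X_eq hdisj hb, X_eq hdisj ha]
    rw [sub_ne_zero]
    intro hh
    exact hab (Fin.val_injective (Nat.cast_injective hh)).symm
  · exact one_ne_zero

end SympAux


namespace SympAux

variable {n l : ℕ} {P : Fin l → Finset (Fin (2*n))}

lemma pl_iff (hdisj : ∀ a b, a ≠ b → Disjoint (P a) (P b))
    (hdeg : (Dset n l P).card ≠ 1) (i j : Fin (2*n)) :
    pl n (vfun n l P) (wfun n l P) i j ≠ 0 ↔ ∃ a b, a ≠ b ∧ i ∈ P a ∧ j ∈ P b := by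
  by_cases h1 : ∃ a, i ∈ P a
  · by_cases h2 : ∃ a, j ∈ P a
    · obtain ⟨a, ha⟩ := h1
      obtain ⟨b, hb⟩ := h2
      rw [pl_eq hdisj ha hb]
      constructor
      · intro h
        refine ⟨a, b, ?_, ha, hb⟩
        intro hab
        subst hab
        simp at h
      · rintro ⟨a', b', hab', ha', hb'⟩
        rw [mem_un hdisj ha ha', mem_un hdisj hb hb']
        apply mul_ne_zero (mul_ne_zero (s_ne hdisj hdeg i) (s_ne hdisj hdeg j))
        rw [sub_ne_zero]
        intro hh
        exact hab' (Fin.val_injective (Nat.cast_injective hh)).symm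
    · constructor
      · intro h
        exact absurd (by simp [pl, (vw_loop h2).1, (vw_loop h2).2]) h
      · rintro ⟨a, b, -, -, hb⟩
        exact absurd ⟨b, hb⟩ h2
  · constructor
    · intro h
      exact absurd (by simp [pl, (vw_loop h1).1, (vw_loop h1).2]) h
    · rintro ⟨a, b, -, ha, -⟩
      exact absurd ⟨a, ha⟩ h1

lemma plD (hdisj : ∀ a b, a ≠ b → Disjoint (P a) (P b))
    (hdeg : (Dset n l P).card ≠ 1) (i : Fin (2*n)) (hi : (i : ℕ) < n) :
    pl n (vfun n l P) (wfun n l P) i (nstar n i) =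
      if i ∈ Dset n l P then cfun n l P i else 0 := by
  classical
  by_cases hiD : i ∈ Dset n l P
  · rw [if_pos hiD]
    have hmem := hiD
    unfold Dset at hmem
    rw [Finset.mem_filter] at hmem
    obtain ⟨-, -, a, b, hab, ha, hb⟩ := hmem
    rw [pl_eq hdisj ha hb]
    have hs1 : sfun n l P i = 1 := by
      unfold sfun
      rw [if_neg]
      intro hcond
      omega
    have hs2 : sfun n l P (nstar n i) =
        cfun n l P i / (Xfun n l P (nstar n i) - Xfun n l P i) := by
      unfold sfun
      rw [if_pos, nstar_nstar]
      refine ⟨?_, by rw [nstar_nstar]; exact hiD⟩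
      have := i.isLt
      simp only [nstar]
      omega
    rw [hs1, hs2, X_eq hdisj hb, X_eq hdisj ha, one_mul]
    have hne : ((b : ℕ) : ℂ) - ((a : ℕ) : ℂ) ≠ 0 := by
      rw [sub_ne_zero]
      intro hh
      exact hab (Fin.val_injective (Nat.cast_injective hh)).symm
    field_simp
  · rw [if_neg hiD]
    by_contra h
    replace h := (pl_iff hdisj hdeg i (nstar n i)).mp h
    apply hiD
    unfold Dset
    rw [Finset.mem_filter]
    exact ⟨Finset.mem_univ _, hi, h⟩

lemma iso_sum (hdisj : ∀ a b, a ≠ b → Disjoint (P a) (P b))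
    (hdeg : (Dset n l P).card ≠ 1) :
    (∑ i ∈ Finset.univ.filter (fun i : Fin (2*n) => (i : ℕ) < n),
      pl n (vfun n l P) (wfun n l P) i (nstar n i)) = 0 := by
  classical
  rw [Finset.sum_congr rfl (fun i hi => plD hdisj hdeg i (Finset.mem_filter.mp hi).2)]
  rw [Finset.sum_ite_mem]
  have hsub : Finset.univ.filter (fun i : Fin (2*n) => (i : ℕ) < n) ∩ Dset n l P
      = Dset n l P := by
    apply Finset.inter_eq_right.mpr
    intro x hx
    unfold Dset at hx
    rw [Finset.mem_filter] at hx
    exact Finset.mem_filter.mpr ⟨Finset.mem_univ _, hx.2.1⟩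
  rw [hsub]
  exact c_sum hdeg

end SympAux


namespace SympAux

lemma forward_construct {n : ℕ} (v w : Fin (2*n) → ℂ)
    (hli : LinearIndependent ℂ ![v, w])
    (hiso : (∑ i ∈ Finset.univ.filter (fun i : Fin (2*n) => (i : ℕ) < n),
      pl n v w i (nstar n i)) = 0) :
    ∃ (l : ℕ) (P : Fin l → Finset (Fin (2*n))), 2 ≤ l ∧
      (∀ a, (P a).Nonempty) ∧
      (∀ a b, a ≠ b → Disjoint (P a) (P b)) ∧
      (∀ i j : Fin (2*n), pl n v w i j ≠ 0 ↔ ∃ a b, a ≠ b ∧ i ∈ P a ∧ j ∈ P b) ∧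
      Nat.card {i : Fin (2*n) // (i : ℕ) < n ∧
        ∃ a b, a ≠ b ∧ i ∈ P a ∧ nstar n i ∈ P b} ≠ 1 := by
  classical
  set nz : Fin (2*n) → Prop := fun i => v i ≠ 0 ∨ w i ≠ 0 with hnzdef
  set rel : Fin (2*n) → Fin (2*n) → Prop :=
    fun i j => nz i ∧ nz j ∧ pl n v w i j = 0 with hreldef
  have hplswap : ∀ i j : Fin (2*n), pl n v w i j = 0 → pl n v w j i = 0 := by
    intro i j h
    unfold pl at *
    linear_combination -h
  have hrsymm : ∀ i j, rel i j → rel j i := by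
    rintro i j ⟨h1, h2, h3⟩
    exact ⟨h2, h1, hplswap _ _ h3⟩
  have hrrefl : ∀ i, nz i → rel i i := by
    intro i hi
    refine ⟨hi, hi, ?_⟩
    unfold pl; ring
  have hrtrans : ∀ i j k, rel i j → rel j k → rel i k := by
    rintro i j k ⟨h1, h2, h3⟩ ⟨-, h4, h5⟩
    exact ⟨h1, h4, pl_trans h2 h3 (hplswap _ _ h5)⟩
  set T : Finset (Fin (2*n)) :=
    Finset.univ.filter (fun t => nz t ∧ ∀ j, rel t j → t ≤ j) with hTdef
  have hTnz : ∀ t ∈ T, nz t := fun t ht => ((Finset.mem_filter.mp ht).2).1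
  have hTmin : ∀ t ∈ T, ∀ j, rel t j → t ≤ j :=
    fun t ht => ((Finset.mem_filter.mp ht).2).2
  have hrep : ∀ i, nz i → ∃ t ∈ T, rel i t := by
    intro i hi
    have hne : (Finset.univ.filter (fun j => rel i j)).Nonempty :=
      ⟨i, Finset.mem_filter.mpr ⟨Finset.mem_univ _, hrrefl i hi⟩⟩
    set t := (Finset.univ.filter (fun j => rel i j)).min' hne with htdef
    have htmem : rel i t := (Finset.mem_filter.mp ((Finset.univ.filter
      (fun j => rel i j)).min'_mem hne)).2
    refine ⟨t, ?_, htmem⟩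
    rw [hTdef, Finset.mem_filter]
    refine ⟨Finset.mem_univ _, htmem.2.1, ?_⟩
    intro j hj
    exact Finset.min'_le _ j (Finset.mem_filter.mpr
      ⟨Finset.mem_univ _, hrtrans i t j htmem hj⟩)
  have hTuniq : ∀ s ∈ T, ∀ t ∈ T, rel s t → s = t := by
    intro s hs t ht h
    exact le_antisymm (hTmin s hs t h) (hTmin t ht s (hrsymm _ _ h))
  obtain ⟨i1, j1, hp1⟩ := exists_pl_ne hli
  have hnz1 := pl_nz hp1
  obtain ⟨t1, ht1, hr1⟩ := hrep i1 hnz1.1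
  obtain ⟨t2, ht2, hr2⟩ := hrep j1 hnz1.2
  have ht12 : t1 ≠ t2 := by
    intro h
    subst h
    exact hp1 (hrtrans i1 t1 j1 hr1 (hrsymm _ _ hr2)).2.2
  have hcard : 2 ≤ T.card := Finset.one_lt_card.mpr ⟨t1, ht1, t2, ht2, ht12⟩
  set e := T.orderIsoOfFin (rfl : T.card = T.card) with hedef
  set Pf : Fin T.card → Finset (Fin (2*n)) :=
    fun a => Finset.univ.filter (fun x => rel ((e a) : Fin (2*n)) x) with hPfdef
  have hkey : ∀ i j : Fin (2*n),
      pl n v w i j ≠ 0 ↔ ∃ a b, a ≠ b ∧ i ∈ Pf a ∧ j ∈ Pf b := by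
    intro i j
    constructor
    · intro h
      have hnz := pl_nz h
      obtain ⟨ti, hti, hri⟩ := hrep i hnz.1
      obtain ⟨tj, htj, hrj⟩ := hrep j hnz.2
      refine ⟨e.symm ⟨ti, hti⟩, e.symm ⟨tj, htj⟩, ?_, ?_, ?_⟩
      · intro hab
        have hteq : ti = tj := by
          have := congrArg (fun z => ((e z) : Fin (2*n))) hab
          simpa using this
        subst hteq
        exact h (hrtrans i ti j hri (hrsymm _ _ hrj)).2.2
      · rw [hPfdef, Finset.mem_filter]
        refine ⟨Finset.mem_univ _, ?_⟩
        simpa using hrsymm _ _ hri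
      · rw [hPfdef, Finset.mem_filter]
        refine ⟨Finset.mem_univ _, ?_⟩
        simpa using hrsymm _ _ hrj
    · rintro ⟨a, b, hab, ha, hb⟩
      rw [hPfdef, Finset.mem_filter] at ha hb
      intro h
      have hij : rel i j := ⟨ha.2.2.1, hb.2.2.1, h⟩
      have heq : ((e a) : Fin (2*n)) = ((e b) : Fin (2*n)) :=
        hTuniq _ (e a).2 _ (e b).2
          (hrtrans _ _ _ ha.2 (hrtrans _ _ _ hij (hrsymm _ _ hb.2)))
      exact hab (e.injective (Subtype.ext heq))
  refine ⟨T.card, Pf, hcard, ?_, ?_, hkey, ?_⟩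
  · intro a
    exact ⟨(e a : Fin (2*n)), Finset.mem_filter.mpr
      ⟨Finset.mem_univ _, hrrefl _ (hTnz _ (e a).2)⟩⟩
  · intro a b hab
    rw [Finset.disjoint_left]
    intro x hx hx'
    rw [hPfdef, Finset.mem_filter] at hx hx'
    have heq : ((e a) : Fin (2*n)) = ((e b) : Fin (2*n)) :=
      hTuniq _ (e a).2 _ (e b).2 (hrtrans _ _ _ hx.2 (hrsymm _ _ hx'.2))
    exact hab (e.injective (Subtype.ext heq))
  · -- degree ≠ 1
    have hcardeq : Nat.card {i : Fin (2*n) // (i : ℕ) < n ∧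
        ∃ a b, a ≠ b ∧ i ∈ Pf a ∧ nstar n i ∈ Pf b}
        = (Finset.univ.filter (fun i : Fin (2*n) =>
            (i : ℕ) < n ∧ pl n v w i (nstar n i) ≠ 0)).card := by
      rw [Nat.card_congr (Equiv.subtypeEquivRight (fun i => by
        rw [← hkey i (nstar n i)]))]
      exact natCard_filter _
    rw [hcardeq]
    intro hone
    obtain ⟨i0, hi0⟩ := Finset.card_eq_one.mp hone
    have hsum2 : (∑ i ∈ Finset.univ.filter (fun i : Fin (2*n) => (i : ℕ) < n),
        pl n v w i (nstar n i)) =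
        ∑ i ∈ (Finset.univ.filter (fun i : Fin (2*n) => (i : ℕ) < n)).filter
          (fun i => pl n v w i (nstar n i) ≠ 0), pl n v w i (nstar n i) :=
      (Finset.sum_filter_of_ne (fun x _ h => h)).symm
    rw [Finset.filter_filter] at hsum2
    rw [hi0] at hsum2
    rw [Finset.sum_singleton] at hsum2
    have hi0mem : i0 ∈ Finset.univ.filter (fun i : Fin (2*n) =>
        (i : ℕ) < n ∧ pl n v w i (nstar n i) ≠ 0) := by
      rw [hi0]; exact Finset.mem_singleton_self _
    rw [Finset.mem_filter] at hi0mem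
    exact hi0mem.2.2 (hsum2 ▸ hiso)

end SympAux


/-- A symplectic matroid `N` of rank 2 on `E_n` is representable over `ℂ`
(i.e. `N = M(x)` for an isotropic 2-plane `x ∈ SpG(2,2n)`, whose bases are the
admissible pairs with nonzero Plücker coordinate) if and only if there is a
rank-2 symmetric matroid `M` on `[2n]` — given by a non-intersecting family
`P_1, …, P_l` with bases the partial 2-transversals — whose symplectic
projection is `N` (the admissible bases of `M` are exactly the bases of `N`)
and whose degree `deg(M) = #{i ∈ [n] : {i,i*} ∈ B(M)}` is `≠ 1`. -/
theorem symplectic_matroid_representable_iff (n : ℕ) (hn : 1 ≤ n)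
    (N : Set (Finset (Fin (2*n)))) (hN : SympMatroid n N) :
    (∃ v w : Fin (2*n) → ℂ, LinearIndependent ℂ ![v, w] ∧
      (∑ i ∈ Finset.univ.filter (fun i : Fin (2*n) => (i : ℕ) < n),
        pl n v w i (nstar n i)) = 0 ∧
      (∀ i j : Fin (2*n), i ≠ j → j ≠ nstar n i →
        (({i, j} : Finset (Fin (2*n))) ∈ N ↔ pl n v w i j ≠ 0))) ↔
    (∃ (l : ℕ) (P : Fin l → Finset (Fin (2*n))), 2 ≤ l ∧
      (∀ a, (P a).Nonempty) ∧
      (∀ a b, a ≠ b → Disjoint (P a) (P b)) ∧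
      (∀ i j : Fin (2*n), i ≠ j → j ≠ nstar n i →
        (({i, j} : Finset (Fin (2*n))) ∈ N ↔ ∃ a b, a ≠ b ∧ i ∈ P a ∧ j ∈ P b)) ∧
      Nat.card {i : Fin (2*n) // (i : ℕ) < n ∧
        ∃ a b, a ≠ b ∧ i ∈ P a ∧ nstar n i ∈ P b} ≠ 1) := by
  constructor
  · rintro ⟨v, w, hli, hiso, hbas⟩
    obtain ⟨l, P, hl, hne, hdisj, hkey, hdeg⟩ := SympAux.forward_construct v w hli hiso
    refine ⟨l, P, hl, hne, hdisj, ?_, hdeg⟩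
    intro i j hij hijs
    rw [hbas i j hij hijs, hkey i j]
  · rintro ⟨l, P, hl, hne, hdisj, hbas, hdeg⟩
    classical
    have hdisj' : ∀ a b : Fin l, a ≠ b → Disjoint (P a) (P b) := hdisj
    have hdeg' : (SympAux.Dset n l P).card ≠ 1 := by
      intro h
      apply hdeg
      rw [SympAux.natCard_filter (fun i : Fin (2*n) => (i : ℕ) < n ∧
        ∃ a b, a ≠ b ∧ i ∈ P a ∧ nstar n i ∈ P b)]
      rw [← h]
      congr 1
    refine ⟨SympAux.vfun n l P, SympAux.wfun n l P, ?_, SympAux.iso_sum hdisj' hdeg', ?_⟩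
    · obtain ⟨i0, hi0⟩ := hne ⟨0, by omega⟩
      obtain ⟨j0, hj0⟩ := hne ⟨1, by omega⟩
      have hab : (⟨0, by omega⟩ : Fin l) ≠ ⟨1, by omega⟩ := by
        intro h
        simpa using congrArg Fin.val h
      exact SympAux.pl_li ((SympAux.pl_iff hdisj' hdeg' i0 j0).mpr
        ⟨_, _, hab, hi0, hj0⟩)
    · intro i j hij hijs
      rw [hbas i j hij hijs, ← SympAux.pl_iff hdisj' hdeg' i j]
end
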